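/- arXiv:1405.5572 — 5 statements merged into one kernel-verified Lean document; each statement's English description precedes it below -/
import Mathlib

section
/- In a finite simple graph in which every vertex has odd degree, every vertex cover is an information dominating set. -/
open Classical

/-- A binary opinion profile `μ` on a finite simple graph `G` is valid under the
local majority rule. -/
def IsValidProfile {V : Type*} [Fintype V] (G : SimpleGraph V) (μ : V → Bool) : Prop :=
  ∀ v : V,
    ((G.neighborFinset v).filter fun u => μ u = μ v).card ≥
    ((G.neighborFinset v).filter fun u => μ u ≠ μ v).card

/-- A subset `D` of the vertices is an information dominating set: any two valid
opinion profiles that agree on `D` are equal. -/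
def IsIDS {V : Type*} [Fintype V] (G : SimpleGraph V) (D : Set V) : Prop :=
  ∀ μ ν : V → Bool, IsValidProfile G μ → IsValidProfile G ν →
    (∀ v ∈ D, μ v = ν v) → μ = ν

/-- `C` is a vertex cover: every edge has at least one endpoint in `C`. -/
def IsVertexCover {V : Type*} (G : SimpleGraph V) (C : Set V) : Prop :=
  ∀ ⦃u v : V⦄, G.Adj u v → u ∈ C ∨ v ∈ C

/-- In an odd-degree graph, every vertex cover is an information
dominating set. -/
theorem vertexCover_isIDS_of_odd_degree {V : Type*} [Fintype V]
    (G : SimpleGraph V) (hodd : ∀ v : V, Odd (G.degree v))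
    (C : Set V) (hC : IsVertexCover G C) : IsIDS G C := by
  intro μ ν hμ hν hagree
  funext v
  by_cases hv : v ∈ C
  · exact hagree v hv
  · -- all neighbors of v are in C
    have hnbr : ∀ u ∈ G.neighborFinset v, μ u = ν u := by
      intro u hu
      rw [SimpleGraph.mem_neighborFinset] at hu
      rcases hC hu.symm with h | h
      · exact hagree u h
      · exact absurd h hv
    by_contra hne
    -- the "equal" filter for μ coincides with the "ne" filter for ν
    have hfilter : ((G.neighborFinset v).filter fun u => μ u = μ v) =
        ((G.neighborFinset v).filter fun u => ν u ≠ ν v) := by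
      apply Finset.filter_congr
      intro u hu
      rw [hnbr u hu]
      constructor
      · intro h h'
        exact hne (h' ▸ h.symm) |>.elim
      · intro h
        rcases eq_or_ne (ν u) (ν v) with h' | h'
        · exact absurd h' (by simpa using h)
        · cases hb : ν u <;> cases hb' : ν v <;> cases hb'' : μ v <;>
            simp_all
    have hfilter2 : ((G.neighborFinset v).filter fun u => μ u ≠ μ v) =
        ((G.neighborFinset v).filter fun u => ν u = ν v) := by
      apply Finset.filter_congr
      intro u hu
      rw [hnbr u hu]
      cases hb : ν u <;> cases hb' : ν v <;> cases hb'' : μ v <;> simp_all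
    have h1 := hμ v
    have h2 := hν v
    rw [hfilter, hfilter2] at h1
    have heq : ((G.neighborFinset v).filter fun u => ν u = ν v).card =
        ((G.neighborFinset v).filter fun u => ν u ≠ ν v).card := le_antisymm h1 h2
    have hsum : ((G.neighborFinset v).filter fun u => ν u = ν v).card +
        ((G.neighborFinset v).filter fun u => ν u ≠ ν v).card = G.degree v := by
      rw [← SimpleGraph.card_neighborFinset_eq_degree]
      rw [Finset.card_filter_add_card_filter_not]
    obtain ⟨k, hk⟩ := hodd v
    rw [← hsum, heq] at hk
    omega
end

section
/- Let G' be the odd-degree transformation of a finite simple graph G. Then every valid opinion profile μ' on G' is the odd-degree transformation of some valid opinion profile μ on G; that is, μ' agrees with a valid profile μ of G on the original vertices, and every auxiliary vertex of G' takes under μ' the same opinion as the vertex it is attached to. -/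
open Classical

/-- The odd-degree transformation of `G`: keep all vertices and edges of `G`
(the left summands), and attach to each even-degree vertex `v` a new auxiliary
pendant vertex `Sum.inr ⟨v, _⟩` adjacent only to `v`. -/
def oddTransform {V : Type*} [Fintype V] (G : SimpleGraph V) :
    SimpleGraph (V ⊕ {v : V // Even (G.degree v)}) where
  Adj x y :=
    match x, y with
    | Sum.inl a, Sum.inl b => G.Adj a b
    | Sum.inl a, Sum.inr u => u.val = a
    | Sum.inr u, Sum.inl a => u.val = a
    | Sum.inr _, Sum.inr _ => False
  symm := by
    constructor
    intro x y h
    cases x <;> cases y <;> simp_all [SimpleGraph.adj_comm]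
  loopless := by
    constructor
    intro x h
    cases x <;> simp_all

/-- The odd-degree transformation of a profile `μ` on `G`: original vertices keep
their opinion, each auxiliary vertex copies the opinion of the vertex it is
attached to. -/
def oddTransformProfile {V : Type*} [Fintype V] (G : SimpleGraph V) (μ : V → Bool) :
    V ⊕ {v : V // Even (G.degree v)} → Bool :=
  Sum.elim μ (fun u => μ u.val)

/-! A pendant vertex has a single neighbour, so the local majority rule forces it to agree with
that neighbour: `μ'` is therefore the transformation of its restriction `μ` to `V`. At an original
vertex `v`, passing from `G` to `G'` adds one agreeing neighbour exactly when `deg v` is even, and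
then the agreeing and disagreeing neighbour counts in `G` have the same parity, so
`agree + 1 ≥ disagree` already forces `agree ≥ disagree`. -/

theorem Finset.filter_disjSum {α β : Type*} (s : Finset α) (t : Finset β) (p : α ⊕ β → Prop)
    [DecidablePred p] :
    (s.disjSum t).filter p =
      (s.filter fun a => p (Sum.inl a)).disjSum (t.filter fun b => p (Sum.inr b)) := by
  ext (a | b) <;> simp

theorem le_of_le_add_one_of_even_add {a b : ℕ} (h : b ≤ a + 1) (he : Even (a + b)) : b ≤ a := by
  obtain ⟨r, hr⟩ := he
  omega

section
variable {V : Type*} [Fintype V]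

theorem IsValidProfile.eq_of_neighborFinset_eq_singleton {G : SimpleGraph V} {μ : V → Bool}
    (h : IsValidProfile G μ) {v w : V} (hv : G.neighborFinset v = {w}) : μ w = μ v := by
  have := h v
  rw [hv] at this
  by_contra hne
  simp [Finset.filter_singleton, hne] at this

theorem oddTransform_neighborFinset_inr (G : SimpleGraph V) (u : {v : V // Even (G.degree v)}) :
    (oddTransform G).neighborFinset (Sum.inr u) = {Sum.inl u.val} := by
  ext (a | b) <;> simp only [SimpleGraph.mem_neighborFinset] <;> simp [oddTransform, eq_comm]

theorem oddTransform_neighborFinset_inl (G : SimpleGraph V) (v : V) :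
    (oddTransform G).neighborFinset (Sum.inl v) =
      (G.neighborFinset v).disjSum (({v} : Finset V).subtype fun w => Even (G.degree w)) := by
  ext (a | b) <;> simp only [SimpleGraph.mem_neighborFinset] <;> simp [oddTransform]

theorem oddTransformProfile_inl (G : SimpleGraph V) (μ : V → Bool) (v : V) :
    oddTransformProfile G μ (Sum.inl v) = μ v :=
  rfl

theorem oddTransformProfile_inr (G : SimpleGraph V) (μ : V → Bool)
    (u : {v : V // Even (G.degree v)}) :
    oddTransformProfile G μ (Sum.inr u) = μ u.val :=
  rfl

theorem IsValidProfile.eq_oddTransformProfile {G : SimpleGraph V}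
    {μ' : V ⊕ {v : V // Even (G.degree v)} → Bool} (h : IsValidProfile (oddTransform G) μ') :
    μ' = oddTransformProfile G (μ' ∘ Sum.inl) := by
  ext (a | u)
  · rfl
  · exact (h.eq_of_neighborFinset_eq_singleton (oddTransform_neighborFinset_inr G u)).symm

theorem IsValidProfile.of_oddTransformProfile {G : SimpleGraph V} {μ : V → Bool}
    (h : IsValidProfile (oddTransform G) (oddTransformProfile G μ)) : IsValidProfile G μ := by
  intro v
  have hpendant : ∀ u ∈ ({v} : Finset V).subtype (fun w => Even (G.degree w)),
      oddTransformProfile G μ (Sum.inr u) = oddTransformProfile G μ (Sum.inl v) := by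
    intro u hu
    rw [Finset.mem_subtype, Finset.mem_singleton] at hu
    rw [oddTransformProfile_inr, hu, oddTransformProfile_inl]
  have hv := h (Sum.inl v)
  rw [oddTransform_neighborFinset_inl, Finset.filter_disjSum, Finset.filter_disjSum,
    Finset.card_disjSum, Finset.card_disjSum, Finset.filter_true_of_mem hpendant,
    Finset.filter_false_of_mem fun u hu => not_not.2 (hpendant u hu), Finset.card_empty,
    add_zero, Finset.card_subtype, Finset.filter_singleton] at hv
  -- `hv : agree + (if Even (G.degree v) then 1 else 0) ≥ disagree`
  have hdeg := (G.neighborFinset v).card_filter_add_card_filter_not (fun u => μ u = μ v)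
  rw [G.card_neighborFinset_eq_degree] at hdeg
  split_ifs at hv with heven
  · exact le_of_le_add_one_of_even_add hv (hdeg ▸ heven)
  · exact hv
end

/-- Every valid opinion profile on the odd-degree transformation of
`G` is the odd-degree transformation of some valid opinion profile on `G`. -/
theorem valid_profile_on_oddTransform_is_transform {V : Type*} [Fintype V]
    (G : SimpleGraph V) (μ' : V ⊕ {v : V // Even (G.degree v)} → Bool)
    (h : IsValidProfile (oddTransform G) μ') :
    ∃ μ : V → Bool, IsValidProfile G μ ∧ μ' = oddTransformProfile G μ := by
  have hμ' := h.eq_oddTransformProfile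
  exact ⟨μ' ∘ Sum.inl, (hμ' ▸ h).of_oddTransformProfile, hμ'⟩
end

section
/- Let S = {x_1, ..., x_k} be a finite set of positive integers and let G be the graph constructed from S as follows: for each x_i, G contains a connected component consisting of two disjoint cliques C¹_i and C²_i, each of size 2x_i, together with a fixed bijection (counterpart map) between them, where each vertex of C¹_i is additionally adjacent to every vertex of C²_i except its counterpart; G is the disjoint union of these k components. Then S can be partitioned into two disjoint subsets with equal sums if and only if G has a strong community bisection. -/
open Classical

/-- A strong community bisection of a graph `H` on a finite vertex set: the part `A`
and its complement have equal size, and every vertex has strictly more neighbors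
in its own part than in the other part. -/
def IsStrongCommunityBisection {W : Type*} [Fintype W] (H : SimpleGraph W) (A : Finset W) :
    Prop :=
  2 * A.card = Fintype.card W ∧
  ∀ v : W,
    ((H.neighborFinset v).filter fun u => (u ∈ A ↔ v ∈ A)).card >
    ((H.neighborFinset v).filter fun u => ¬(u ∈ A ↔ v ∈ A)).card

/-- The graph constructed from a set `S` of positive integers: for each `x ∈ S`
there is one connected component whose vertices are `Fin 2 × Fin (2 * x)`
(two cliques `C¹ = {0} × Fin (2x)` and `C² = {1} × Fin (2x)`, with counterpart map
`(0, j) ↔ (1, j)`).  Within a component, two vertices are adjacent iff their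
`Fin (2x)`-indices differ: this makes each `Cᶜ` a clique of size `2x` and joins every
vertex of `C¹` to every vertex of `C²` except its counterpart.  Distinct components
are not joined. -/
def sppGraph (S : Finset ℕ) :
    SimpleGraph (Σ x : {x // x ∈ S}, Fin 2 × Fin (2 * x.val)) where
  Adj a b := a.1 = b.1 ∧ (a.2.2 : ℕ) ≠ (b.2.2 : ℕ)
  symm := by
    constructor
    rintro a b ⟨h1, h2⟩
    exact ⟨h1.symm, h2.symm⟩
  loopless := by
    constructor
    rintro a ⟨-, h⟩
    exact h rfl

/-! Every neighbourhood in `sppGraph S` lies in the vertex's own component and misses only two of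
its vertices (the vertex and its counterpart). Hence a vertex with a strict majority of its
neighbours on its own side forces that side to hold a strict majority of the whole component, so
a strong community bisection cannot split a component. Strong community bisections are therefore
exactly the unions of components whose vertex count, `4x` for the component of `x`, is half the
total, i.e. the equal-sum partitions of `S`. -/

open Finset

theorem Finset.card_filter_not_lt_card_filter_of_card_sdiff_le_two {α : Type*} [DecidableEq α]
    {N K : Finset α} {v : α} (p : α → Prop) [DecidablePred p] (hNK : N ⊆ K) (hvK : v ∈ K)
    (hvN : v ∉ N) (hKN : #(K \ N) ≤ 2) (hpv : p v)
    (hN : #(N.filter fun u => ¬p u) < #(N.filter p)) :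
    #(K.filter fun u => ¬p u) < #(K.filter p) := by
  have h_same : #(N.filter p) + 1 ≤ #(K.filter p) := by
    have : insert v (N.filter p) ⊆ K.filter p :=
      insert_subset (mem_filter.2 ⟨hvK, hpv⟩) (filter_subset_filter p hNK)
    simpa [card_insert_of_notMem (fun h => hvN (mem_filter.1 h).1)] using card_le_card this
  have h_other : #(K.filter fun u => ¬p u) ≤ #(N.filter fun u => ¬p u) + 1 := by
    have hsplit : K.filter (fun u => ¬p u) ⊆ N.filter (fun u => ¬p u) ∪ (K \ N).erase v := by
      intro u hu
      obtain ⟨huK, hpu⟩ := mem_filter.1 hu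
      by_cases huN : u ∈ N
      · exact mem_union_left _ (mem_filter.2 ⟨huN, hpu⟩)
      · exact mem_union_right _
          (mem_erase.2 ⟨fun h => hpu (h ▸ hpv), mem_sdiff.2 ⟨huK, huN⟩⟩)
    have hv : v ∈ K \ N := mem_sdiff.2 ⟨hvK, hvN⟩
    have := (card_le_card hsplit).trans (card_union_le _ _)
    rw [card_erase_of_mem hv] at this
    omega
  omega

theorem IsStrongCommunityBisection.mem_iff_mem {W : Type*} [Fintype W] [DecidableEq W]
    {H : SimpleGraph W} {A K : Finset W}
    (hA : IsStrongCommunityBisection H A)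
    (hK : ∀ v ∈ K, H.neighborFinset v ⊆ K ∧ #(K \ H.neighborFinset v) ≤ 2)
    {v w : W} (hv : v ∈ K) (hw : w ∈ K) : v ∈ A ↔ w ∈ A := by
  have majority : ∀ v ∈ K, #(K.filter fun u => ¬(u ∈ A ↔ v ∈ A)) <
      #(K.filter fun u => (u ∈ A ↔ v ∈ A)) := fun v hv =>
    card_filter_not_lt_card_filter_of_card_sdiff_le_two _ (hK v hv).1 hv
      (H.notMem_neighborFinset_self v) (hK v hv).2 Iff.rfl (by convert hA.2 v)
  have hv' := majority v hv
  have hw' := majority w hw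
  by_cases hvA : v ∈ A <;> by_cases hwA : w ∈ A <;>
    simp only [hvA, hwA, iff_true, iff_false, not_not] at hv' hw' ⊢ <;>
    omega

theorem isStrongCommunityBisection_of_forall_adj {W : Type*} [Fintype W]
    {H : SimpleGraph W} {A : Finset W} (hcard : 2 * #A = Fintype.card W)
    (hdeg : ∀ v, (H.neighborFinset v).Nonempty)
    (hA : ∀ u v, H.Adj u v → (u ∈ A ↔ v ∈ A)) :
    IsStrongCommunityBisection H A := by
  refine ⟨hcard, fun v => ?_⟩
  have same_side : ∀ u ∈ H.neighborFinset v, (u ∈ A ↔ v ∈ A) :=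
    fun u hu => hA u v (H.mem_neighborFinset v u |>.1 hu).symm
  rw [filter_true_of_mem same_side, filter_false_of_mem fun u hu h => h (same_side u hu)]
  exact (hdeg v).card_pos

abbrev SppVertex (S : Finset ℕ) := Σ x : {x // x ∈ S}, Fin 2 × Fin (2 * x.val)

namespace SppVertex

variable {S : Finset ℕ}

def component (c : {x // x ∈ S}) : Finset (SppVertex S) := univ.filter (·.1 = c)

def unionComponents (T : Finset ℕ) : Finset (SppVertex S) := univ.filter (·.1.val ∈ T)

theorem card_unionComponents (T : Finset ℕ) :
    #(unionComponents (S := S) T) = 4 * ∑ x ∈ S ∩ T, x := by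
  have : unionComponents (S := S) T = (univ.filter fun c : {x // x ∈ S} => c.val ∈ T).sigma
      fun _ => univ := by
    ext v; simp [unionComponents]
  rw [this, card_sigma, sum_filter, ← sum_ite_mem, ← sum_coe_sort S, mul_sum]
  refine sum_congr rfl fun c _ => ?_
  split_ifs <;> simp [Fintype.card_prod, ← mul_assoc]

theorem card_eq : Fintype.card (SppVertex S) = 4 * ∑ x ∈ S, x := by
  calc Fintype.card (SppVertex S) = #(unionComponents (S := S) S) := by
        rw [unionComponents, filter_true_of_mem fun v _ => v.1.2, card_univ]
    _ = 4 * ∑ x ∈ S, x := by rw [card_unionComponents, inter_self]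

theorem neighborFinset_subset_component (v : SppVertex S) :
    (sppGraph S).neighborFinset v ⊆ component v.1 := fun u hu =>
  mem_filter.2 ⟨mem_univ u, ((SimpleGraph.mem_neighborFinset _ _ _).1 hu).1.symm⟩

theorem card_component_sdiff_neighborFinset_le (v : SppVertex S) :
    #(component v.1 \ (sppGraph S).neighborFinset v) ≤ 2 := by
  have : component v.1 \ (sppGraph S).neighborFinset v ⊆
      univ.image fun i : Fin 2 => (⟨v.1, (i, v.2.2)⟩ : SppVertex S) := by
    obtain ⟨d, -, j'⟩ := v
    rintro ⟨c, i, j⟩ hu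
    rw [mem_sdiff, SimpleGraph.mem_neighborFinset] at hu
    obtain ⟨hc, hnadj⟩ := hu
    obtain rfl : c = d := (mem_filter.1 hc).2
    obtain rfl : j = j' := Fin.ext (by_contra fun h => hnadj ⟨rfl, fun e => h e.symm⟩)
    exact mem_image.2 ⟨i, mem_univ i, rfl⟩
  simpa using card_le_card this |>.trans card_image_le

theorem neighborFinset_nonempty (v : SppVertex S) : ((sppGraph S).neighborFinset v).Nonempty := by
  obtain ⟨c, i, j⟩ := v
  have hc : 1 < 2 * c.val := by have := j.pos; omega
  obtain ⟨j', hj'⟩ := Fintype.exists_ne_of_one_lt_card (by simpa using hc) j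
  exact ⟨⟨c, i, j'⟩,
    (SimpleGraph.mem_neighborFinset _ _ _).2 ⟨rfl, Fin.val_ne_of_ne hj'.symm⟩⟩

theorem isStrongCommunityBisection_unionComponents_iff {T : Finset ℕ} (hT : T ⊆ S) :
    IsStrongCommunityBisection (sppGraph S) (unionComponents T) ↔
      ∑ x ∈ T, x = ∑ x ∈ S \ T, x := by
  have hsum : ∑ x ∈ S \ T, x + ∑ x ∈ T, x = ∑ x ∈ S, x := sum_sdiff hT
  have hcard : 2 * #(unionComponents (S := S) T) = Fintype.card (SppVertex S) ↔
      ∑ x ∈ T, x = ∑ x ∈ S \ T, x := by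
    rw [card_unionComponents, card_eq, inter_eq_right.2 hT]
    omega
  exact ⟨fun h => hcard.1 h.1, fun h => isStrongCommunityBisection_of_forall_adj (hcard.2 h)
    neighborFinset_nonempty fun u w huw => by simp [unionComponents, huw.1]⟩

theorem mem_iff_mem_of_fst_eq {A : Finset (SppVertex S)}
    (hA : IsStrongCommunityBisection (sppGraph S) A) {v w : SppVertex S} (h : v.1 = w.1) :
    v ∈ A ↔ w ∈ A := by
  refine hA.mem_iff_mem (K := component v.1) (fun u hu => ?_) (mem_filter.2 ⟨mem_univ v, rfl⟩)
    (mem_filter.2 ⟨mem_univ w, h.symm⟩)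
  rw [← (mem_filter.1 hu).2]
  exact ⟨neighborFinset_subset_component u, card_component_sdiff_neighborFinset_le u⟩

theorem eq_unionComponents_of_isStrongCommunityBisection {A : Finset (SppVertex S)}
    (hA : IsStrongCommunityBisection (sppGraph S) A) :
    A = unionComponents (S.filter fun x => ∃ w ∈ A, w.1.val = x) := by
  ext v
  simp only [unionComponents, mem_filter, mem_univ, true_and, v.1.2]
  exact ⟨fun hv => ⟨v, hv, rfl⟩,
    fun ⟨w, hw, hwv⟩ => (mem_iff_mem_of_fst_eq hA (Subtype.ext hwv)).1 hw⟩

end SppVertex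

open SppVertex in
theorem equal_sum_partition_iff_scb_general (S : Finset ℕ) :
    (∃ T ⊆ S, ∑ x ∈ T, x = ∑ x ∈ S \ T, x) ↔
    ∃ A : Finset (Σ x : {x // x ∈ S}, Fin 2 × Fin (2 * x.val)),
      IsStrongCommunityBisection (sppGraph S) A := by
  constructor
  · rintro ⟨T, hTS, hsum⟩
    exact ⟨unionComponents T, (isStrongCommunityBisection_unionComponents_iff hTS).2 hsum⟩
  · rintro ⟨A, hA⟩
    have hTS := filter_subset (fun x => ∃ w ∈ A, w.1.val = x) S
    refine ⟨_, hTS, (isStrongCommunityBisection_unionComponents_iff hTS).1 ?_⟩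
    rwa [← eq_unionComponents_of_isStrongCommunityBisection hA]

/-- a set of positive integers has an equal-sum partition iff the
associated graph has a strong community bisection. -/
theorem equal_sum_partition_iff_scb (S : Finset ℕ) (hpos : ∀ x ∈ S, 0 < x) :
    (∃ T ⊆ S, ∑ x ∈ T, x = ∑ x ∈ S \ T, x) ↔
    ∃ A : Finset (Σ x : {x // x ∈ S}, Fin 2 × Fin (2 * x.val)),
      IsStrongCommunityBisection (sppGraph S) A :=
  equal_sum_partition_iff_scb_general S
end

section
/- Let G be a finite tree in which every vertex has odd degree. Then every information dominating set of G that does not contain any leaf is a vertex cover of G. -/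
open Classical

/-!
Suppose the edge `uv` has neither endpoint in `D`. Delete all edges at `u` and `v`; the tree
falls apart into `u`, `v` and branches, each attached (by acyclicity) to exactly one neighbour of
`u` or `v`. Give `u`, `v` and their leaf neighbours a common opinion `b`, and give each branch a
constant opinion, chosen so that half (rounded down) of the non-leaf neighbours of `u` other than
`v` hold `true`, and likewise for `v`. Every vertex then agrees with at least half of its
neighbours, for `b = false` as well as for `b = true`. The two valid profiles differ only at
`u`, `v` and leaves, so an IDS without leaves cannot tell them apart.
-/

open Finset

namespace SimpleGraph

variable {V : Type*} {G : SimpleGraph V}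

lemma IsAcyclic.not_adj_of_adj_of_adj (hG : G.IsAcyclic) {u v w : V} (huv : G.Adj u v)
    (huw : G.Adj u w) : ¬ G.Adj v w := fun hvw =>
  hG.cliqueFree le_rfl {u, v, w} (is3Clique_triple_iff.2 ⟨huv, huw, hvw⟩)

/-- The edge `uw` is a bridge, and a path from `w` to `a` avoiding `u` and `v` would close it
into a cycle through `u`. -/
lemma IsAcyclic.eq_of_reachable_deleteIncidenceSet (hG : G.IsAcyclic) {u v w a : V}
    (huv : G.Adj u v) (huw : G.Adj u w) (hwv : w ≠ v) (ha : G.Adj u a ∨ G.Adj v a)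
    (hwa : ((G.deleteIncidenceSet u).deleteIncidenceSet v).Reachable w a) : a = w := by
  by_contra haw
  apply isBridge_iff.1 (isAcyclic_iff_forall_adj_isBridge.1 hG huw)
  have hwa' : (G.deleteEdges {s(u, w)}).Reachable w a :=
    hwa.mono <| (deleteIncidenceSet_le _ _).trans <| (deleteEdges_anti <| by
      simpa [incidenceSet] using huw)
  refine (hwa'.trans ?_).symm
  rcases ha with hua | hva
  · exact (deleteEdges_adj.2 ⟨hua.symm, by simp [haw, hua.ne']⟩).reachable
  · exact (deleteEdges_adj.2 ⟨hva.symm, by simp [haw, hwv.symm]⟩).reachable.trans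
      (deleteEdges_adj.2 ⟨huv.symm, by simp [hwv.symm, huv.ne']⟩).reachable

variable [Fintype V]

lemma eq_of_adj_of_degree_eq_one {x y c : V} (hy : G.degree y = 1) (hcy : G.Adj c y)
    (hxy : G.Adj x y) : x = c :=
  card_le_one.1 hy.le x (by simpa using hxy.symm) c (by simpa using hcy.symm)

noncomputable def dissenters (G : SimpleGraph V) (μ : V → Bool) (x : V) : Finset V :=
  {y ∈ G.neighborFinset x | μ y ≠ μ x}

lemma mem_dissenters {μ : V → Bool} {x y : V} :
    y ∈ G.dissenters μ x ↔ G.Adj x y ∧ μ y ≠ μ x := by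
  simp [dissenters]

lemma isValidProfile_of_two_mul_le {μ : V → Bool}
    (h : ∀ x, 2 * #(G.dissenters μ x) ≤ G.degree x) :
    IsValidProfile G μ := by
  intro x
  have hsplit := card_filter_add_card_filter_not (s := G.neighborFinset x)
    (p := fun y => μ y = μ x)
  rw [card_neighborFinset_eq_degree] at hsplit
  have := h x
  simp only [dissenters, ge_iff_le, ne_eq] at this hsplit ⊢
  omega

lemma two_mul_card_le_degree_of_subset_singleton {s : Finset V} {c x : V} (hs : s ⊆ {c})
    (hcx : G.Adj c x) (hx : G.degree x ≠ 1) : 2 * #s ≤ G.degree x := by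
  have hs1 : #s ≤ 1 := (card_le_card hs).trans_eq (card_singleton c)
  have hx0 : 0 < G.degree x := (G.degree_pos_iff_exists_adj x).2 ⟨c, hcx.symm⟩
  omega

def flipSet (G : SimpleGraph V) (u v : V) : Set V :=
  {x | x = u ∨ x = v ∨ (G.degree x = 1 ∧ (G.Adj u x ∨ G.Adj v x))}

noncomputable def innerNeighbors (G : SimpleGraph V) (u v : V) : Finset V :=
  {w ∈ G.neighborFinset u | w ≠ v ∧ G.degree w ≠ 1}

/-- `B` selects, by their roots among the neighbours of `u` and `v`, the branches holding `true`. -/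
noncomputable def flipProfile (G : SimpleGraph V) (u v : V) (B : Finset V) (b : Bool)
    (x : V) : Bool :=
  if x ∈ G.flipSet u v then b
  else decide (∃ a ∈ B, ((G.deleteIncidenceSet u).deleteIncidenceSet v).Reachable x a)

variable {u v : V} {B : Finset V} {b : Bool}

lemma flipSet_comm (u v : V) : G.flipSet u v = G.flipSet v u := by
  ext x; simp only [flipSet, Set.mem_ofPred_eq]; tauto

lemma flipProfile_comm (u v : V) : G.flipProfile u v = G.flipProfile v u := by
  have hdel : (G.deleteIncidenceSet u).deleteIncidenceSet v =
      (G.deleteIncidenceSet v).deleteIncidenceSet u := by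
    ext; simp only [deleteIncidenceSet_adj]; tauto
  ext B b x
  simp only [flipProfile, flipSet_comm u v, hdel]

lemma flipProfile_of_mem {x : V} (hx : x ∈ G.flipSet u v) : G.flipProfile u v B b x = b :=
  if_pos hx

lemma flipProfile_of_notMem {x : V} (hx : x ∉ G.flipSet u v) :
    G.flipProfile u v B b x =
      decide (∃ a ∈ B, ((G.deleteIncidenceSet u).deleteIncidenceSet v).Reachable x a) :=
  if_neg hx

lemma flipProfile_eq_of_adj {x y : V} (hx : x ∉ G.flipSet u v) (hy : y ∉ G.flipSet u v)
    (hxy : G.Adj x y) : G.flipProfile u v B b y = G.flipProfile u v B b x := by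
  have hxy' : ((G.deleteIncidenceSet u).deleteIncidenceSet v).Adj x y := by
    simp only [deleteIncidenceSet_adj]
    exact ⟨⟨hxy, fun h => hx (.inl h), fun h => hy (.inl h)⟩,
      fun h => hx (.inr (.inl h)), fun h => hy (.inr (.inl h))⟩
  have hreach (a : V) : ((G.deleteIncidenceSet u).deleteIncidenceSet v).Reachable y a ↔
      ((G.deleteIncidenceSet u).deleteIncidenceSet v).Reachable x a :=
    ⟨hxy'.reachable.trans, hxy'.reachable.symm.trans⟩
  simp only [flipProfile_of_notMem hx, flipProfile_of_notMem hy, hreach]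

lemma flipProfile_eq_of_mem_innerNeighbors (hG : G.IsAcyclic) (huv : G.Adj u v)
    (hB : B ⊆ G.innerNeighbors u v ∪ G.innerNeighbors v u) {w : V}
    (hw : w ∈ G.innerNeighbors u v) : G.flipProfile u v B b w = decide (w ∈ B) := by
  simp only [innerNeighbors, mem_filter, mem_neighborFinset] at hw
  obtain ⟨huw, hwv, hw1⟩ := hw
  have hwS : w ∉ G.flipSet u v := by
    rintro (h | h | ⟨h, -⟩)
    exacts [huw.ne' h, hwv h, hw1 h]
  rw [flipProfile_of_notMem hwS, decide_eq_decide]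
  refine ⟨fun ⟨a, ha, hwa⟩ => ?_, fun h => ⟨w, h, .refl w⟩⟩
  have haadj : G.Adj u a ∨ G.Adj v a := by
    rcases mem_union.1 (hB ha) with h | h <;> simp only [innerNeighbors, mem_filter,
      mem_neighborFinset] at h <;> tauto
  exact hG.eq_of_reachable_deleteIncidenceSet huv huw hwv haadj hwa ▸ ha

lemma two_mul_card_dissenters_flipProfile_left_le (hG : G.IsAcyclic) (huv : G.Adj u v)
    (hB : B ⊆ G.innerNeighbors u v ∪ G.innerNeighbors v u)
    (hBu : #(G.innerNeighbors u v ∩ B) = #(G.innerNeighbors u v) / 2) (b : Bool) :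
    2 * #(G.dissenters (G.flipProfile u v B b) u) ≤ G.degree u := by
  have hdis : G.dissenters (G.flipProfile u v B b) u ⊆
      {w ∈ G.innerNeighbors u v | decide (w ∈ B) ≠ b} := by
    intro y hy
    rw [mem_dissenters, flipProfile_of_mem (.inl rfl)] at hy
    obtain ⟨huy, hne⟩ := hy
    have hy : y ∈ G.innerNeighbors u v := by
      refine mem_filter.2 ⟨(G.mem_neighborFinset _ _).2 huy, fun h => hne ?_, fun h => hne ?_⟩
      exacts [flipProfile_of_mem (.inr (.inl h)),
        flipProfile_of_mem (.inr (.inr ⟨h, .inl huy⟩))]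
    rw [flipProfile_eq_of_mem_innerNeighbors hG huv hB hy] at hne
    exact mem_filter.2 ⟨hy, hne⟩
  have hinner : #(G.innerNeighbors u v) + 1 ≤ G.degree u := by
    rw [← card_neighborFinset_eq_degree,
      ← card_erase_add_one ((G.mem_neighborFinset _ _).2 huv)]
    gcongr
    intro w hw
    simp only [innerNeighbors, mem_filter] at hw
    exact mem_erase.2 ⟨hw.2.1, hw.1⟩
  have hsplit := card_sdiff_add_card_inter (G.innerNeighbors u v) B
  have hcard : #{w ∈ G.innerNeighbors u v | decide (w ∈ B) ≠ b} ≤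
      (#(G.innerNeighbors u v) + 1) / 2 := by
    cases b
    · simp only [ne_eq, decide_eq_false_iff_not, not_not, filter_mem_eq_inter]
      omega
    · simp only [ne_eq, decide_eq_true_iff, filter_notMem_eq_sdiff]
      omega
  have := card_le_card hdis
  omega

lemma flipProfile_eq_of_adj_of_ne {x y : V} (hxu : x ≠ u) (hxv : x ≠ v) (hyu : y ≠ u)
    (hyv : y ≠ v) (hxy : G.Adj x y) : G.flipProfile u v B b y = G.flipProfile u v B b x := by
  have hx : x ∉ G.flipSet u v := by
    rintro (h | h | ⟨hx1, h | h⟩)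
    exacts [hxu h, hxv h, hyu (eq_of_adj_of_degree_eq_one hx1 h hxy.symm),
      hyv (eq_of_adj_of_degree_eq_one hx1 h hxy.symm)]
  have hy : y ∉ G.flipSet u v := by
    rintro (h | h | ⟨hy1, h | h⟩)
    exacts [hyu h, hyv h, hxu (eq_of_adj_of_degree_eq_one hy1 h hxy),
      hxv (eq_of_adj_of_degree_eq_one hy1 h hxy)]
  exact flipProfile_eq_of_adj hx hy hxy

lemma two_mul_card_dissenters_flipProfile_le_of_ne (hG : G.IsAcyclic) (huv : G.Adj u v) {x : V}
    (hxu : x ≠ u) (hxv : x ≠ v) (b : Bool) :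
    2 * #(G.dissenters (G.flipProfile u v B b) x) ≤ G.degree x := by
  have hdis :
      ∀ y ∈ G.dissenters (G.flipProfile u v B b) x, G.Adj x y ∧ (y = u ∨ y = v) := by
    intro y hy
    rw [mem_dissenters] at hy
    refine ⟨hy.1, ?_⟩
    by_contra! hyuv
    exact hy.2 (flipProfile_eq_of_adj_of_ne hxu hxv hyuv.1 hyuv.2 hy.1)
  by_cases hx : x ∈ G.flipSet u v
  · suffices G.dissenters (G.flipProfile u v B b) x = ∅ by simp [this]
    refine eq_empty_of_forall_notMem fun y hy => (mem_dissenters.1 hy).2 ?_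
    obtain ⟨-, rfl | rfl⟩ := hdis y hy
    exacts [(flipProfile_of_mem (.inl rfl)).trans (flipProfile_of_mem hx).symm,
      (flipProfile_of_mem (.inr (.inl rfl))).trans (flipProfile_of_mem hx).symm]
  have hx1 (hcx : G.Adj u x ∨ G.Adj v x) : G.degree x ≠ 1 :=
    fun h => hx (.inr (.inr ⟨h, hcx⟩))
  by_cases hux : G.Adj u x
  · refine two_mul_card_le_degree_of_subset_singleton (fun y hy => ?_) hux (hx1 (.inl hux))
    obtain ⟨hxy, rfl | rfl⟩ := hdis y hy
    exacts [mem_singleton_self y, (hG.not_adj_of_adj_of_adj huv hux hxy.symm).elim]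
  by_cases hvx : G.Adj v x
  · refine two_mul_card_le_degree_of_subset_singleton (fun y hy => ?_) hvx (hx1 (.inr hvx))
    obtain ⟨hxy, rfl | rfl⟩ := hdis y hy
    exacts [(hux hxy.symm).elim, mem_singleton_self y]
  suffices G.dissenters (G.flipProfile u v B b) x = ∅ by simp [this]
  refine eq_empty_of_forall_notMem fun y hy => ?_
  obtain ⟨hxy, rfl | rfl⟩ := hdis y hy
  exacts [hux hxy.symm, hvx hxy.symm]

lemma isValidProfile_flipProfile (hG : G.IsAcyclic) (huv : G.Adj u v)
    (hB : B ⊆ G.innerNeighbors u v ∪ G.innerNeighbors v u)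
    (hBu : #(G.innerNeighbors u v ∩ B) = #(G.innerNeighbors u v) / 2)
    (hBv : #(G.innerNeighbors v u ∩ B) = #(G.innerNeighbors v u) / 2) (b : Bool) :
    IsValidProfile G (G.flipProfile u v B b) := by
  refine isValidProfile_of_two_mul_le fun x => ?_
  by_cases hxu : x = u
  · subst hxu
    exact two_mul_card_dissenters_flipProfile_left_le hG huv hB hBu b
  by_cases hxv : x = v
  · subst hxv
    rw [flipProfile_comm]
    exact two_mul_card_dissenters_flipProfile_left_le hG huv.symm
      (hB.trans (union_comm _ _).subset) hBv b
  exact two_mul_card_dissenters_flipProfile_le_of_ne hG huv hxu hxv b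

lemma IsAcyclic.exists_balanced_finset (hG : G.IsAcyclic) (huv : G.Adj u v) :
    ∃ B : Finset V, B ⊆ G.innerNeighbors u v ∪ G.innerNeighbors v u ∧
      #(G.innerNeighbors u v ∩ B) = #(G.innerNeighbors u v) / 2 ∧
      #(G.innerNeighbors v u ∩ B) = #(G.innerNeighbors v u) / 2 := by
  have hdisj : Disjoint (G.innerNeighbors u v) (G.innerNeighbors v u) := by
    refine Finset.disjoint_left.2 fun w hwu hwv => ?_
    simp only [innerNeighbors, mem_filter, mem_neighborFinset] at hwu hwv
    exact hG.not_adj_of_adj_of_adj huv hwu.1 hwv.1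
  obtain ⟨Bu, hBu, hBu_card⟩ :=
    exists_subset_card_eq <| Nat.div_le_self #(G.innerNeighbors u v) 2
  obtain ⟨Bv, hBv, hBv_card⟩ :=
    exists_subset_card_eq <| Nat.div_le_self #(G.innerNeighbors v u) 2
  refine ⟨Bu ∪ Bv, union_subset_union hBu hBv, ?_, ?_⟩
  · rw [inter_union_distrib_left, inter_eq_right.2 hBu,
      disjoint_iff_inter_eq_empty.1 (hdisj.mono_right hBv), union_empty, hBu_card]
  · rw [inter_union_distrib_left, inter_eq_right.2 hBv,
      disjoint_iff_inter_eq_empty.1 (hdisj.symm.mono_right hBu), empty_union, hBv_card]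

end SimpleGraph

theorem ids_without_leaf_is_vertexCover_general {V : Type*} [Fintype V]
    (G : SimpleGraph V) (htree : G.IsTree)
    (D : Set V) (hD : IsIDS G D) (hleaf : ∀ v ∈ D, G.degree v ≠ 1) :
    IsVertexCover G D := by
  intro u v huv
  by_contra! huvD
  obtain ⟨B, hB, hBu, hBv⟩ := htree.isAcyclic.exists_balanced_finset huv
  have hvalid := SimpleGraph.isValidProfile_flipProfile htree.isAcyclic huv hB hBu hBv
  have hagree (w : V) (hw : w ∈ D) :
      G.flipProfile u v B false w = G.flipProfile u v B true w := by
    have hwS : w ∉ G.flipSet u v := by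
      rintro (rfl | rfl | ⟨hw1, -⟩)
      exacts [huvD.1 hw, huvD.2 hw, hleaf w hw hw1]
    rw [SimpleGraph.flipProfile_of_notMem hwS, SimpleGraph.flipProfile_of_notMem hwS]
  have hu := congrFun (hD _ _ (hvalid false) (hvalid true) hagree) u
  rw [SimpleGraph.flipProfile_of_mem (.inl rfl), SimpleGraph.flipProfile_of_mem (.inl rfl)] at hu
  exact Bool.false_ne_true hu

/-- in an odd-degree tree, every IDS containing no leaf is a vertex
cover. -/
theorem ids_without_leaf_is_vertexCover {V : Type*} [Fintype V]
    (G : SimpleGraph V) (htree : G.IsTree) (hodd : ∀ v : V, Odd (G.degree v))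
    (D : Set V) (hD : IsIDS G D) (hleaf : ∀ v ∈ D, G.degree v ≠ 1) :
    IsVertexCover G D :=
  ids_without_leaf_is_vertexCover_general G htree D hD hleaf
end

section
/- Let G be a finite tree in which every vertex has odd degree. If C is a vertex cover of G of minimum size among all vertex covers of G that contain no leaf, then C is an information dominating set of G of minimum size among all information dominating sets of G. -/
open Classical

/-! In an odd-degree graph every vertex cover `C` is an IDS: a vertex outside `C` sees the same
neighbours in two profiles agreeing on `C`, so if it were flipped its agreeing and disagreeing
neighbours would swap, and both profiles could be valid there only at even degree.

Conversely, for an edge `uv` of a tree there are two valid profiles that differ at `u` but only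
on `u`, `v` and the leaves hanging at them. Pick sets `Tu`, `Tv` of non-leaf neighbours of `u`
and `v` (other than `v`, `u`); one profile is true on the branches hanging off `Tu ∪ Tv` away
from `u` and `v`, the other also on `u`, `v` and their leaves. The sizes of `Tu` and `Tv` are
chosen so that `u` and `v` are outvoted by their neighbours in neither profile. Hence an IDS meets
each such set, and moving each of its leaves to the leaf's neighbour turns it into a leafless
vertex cover that is no larger. -/

open Finset

lemma Finset.exists_subset_two_mul_card_le {α : Type*} [DecidableEq α] {W : Finset α} {d : ℕ}
    (h : #W < d) : ∃ T ⊆ W, 2 * #T ≤ d ∧ 2 * #(W \ T) ≤ d := by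
  obtain ⟨T, hTW, hT⟩ := exists_subset_card_eq (Nat.sub_le #W (d / 2))
  refine ⟨T, hTW, by omega, ?_⟩
  rw [card_sdiff_of_subset hTW]
  omega

section Validity
variable {V : Type*} [Fintype V] {G : SimpleGraph V}

lemma isValidProfile_iff {μ : V → Bool} :
    IsValidProfile G μ ↔ ∀ x, 2 * #{y ∈ G.neighborFinset x | μ y ≠ μ x} ≤ G.degree x := by
  refine forall_congr' fun x => ?_
  have : #{y ∈ G.neighborFinset x | μ y = μ x} + #{y ∈ G.neighborFinset x | μ y ≠ μ x} =
      G.degree x := card_filter_add_card_filter_not _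
  omega

theorem isIDS_of_isVertexCover {C : Set V} (hodd : ∀ x ∉ C, Odd (G.degree x))
    (hC : IsVertexCover G C) : IsIDS G C := by
  intro μ ν hμ hν hCeq
  by_contra hne
  obtain ⟨x, hx⟩ := Function.ne_iff.1 hne
  have hxC : x ∉ C := fun h => hx (hCeq x h)
  have hνx : ν x = !μ x := by revert hx; cases μ x <;> cases ν x <;> simp
  have hnbr : ∀ y ∈ G.neighborFinset x, μ y = ν y := fun y hy =>
    hCeq y ((hC ((G.mem_neighborFinset x y).1 hy)).resolve_left hxC)
  have hswap : {y ∈ G.neighborFinset x | ν y ≠ ν x} = {y ∈ G.neighborFinset x | μ y = μ x} :=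
    filter_congr fun y hy => by rw [← hnbr y hy, hνx]; cases μ x <;> cases μ y <;> simp
  have hsplit : #{y ∈ G.neighborFinset x | μ y = μ x} + #{y ∈ G.neighborFinset x | μ y ≠ μ x} =
      G.degree x := card_filter_add_card_filter_not _
  have hμ2 := isValidProfile_iff.1 hμ x
  have hν2 := isValidProfile_iff.1 hν x
  rw [hswap] at hν2
  obtain ⟨k, hk⟩ := hodd x hxC
  omega

end Validity

namespace SimpleGraph
variable {V : Type*} {G : SimpleGraph V} {s T : Set V} {u v x y : V}

def isolate (G : SimpleGraph V) (s : Set V) : SimpleGraph V :=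
  G.deleteEdges {e | ∃ z ∈ s, z ∈ e}

@[simp] lemma isolate_adj : (G.isolate s).Adj x y ↔ G.Adj x y ∧ x ∉ s ∧ y ∉ s := by
  simp only [isolate, deleteEdges_adj, Set.mem_ofPred_eq, Sym2.mem_iff, not_exists, not_and]
  grind

lemma eq_of_reachable_isolate (h : (G.isolate s).Reachable x y) (hy : y ∈ s) : x = y := by
  obtain ⟨p⟩ := h.symm
  cases p with
  | nil => rfl
  | cons h _ => exact absurd hy (isolate_adj.1 h).2.1

def branches (G : SimpleGraph V) (s T : Set V) : Set V :=
  {x | ∃ w ∈ T, (G.isolate s).Reachable w x}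

lemma subset_branches : T ⊆ G.branches s T := fun w hw => ⟨w, hw, .rfl⟩

lemma notMem_branches (hT : Disjoint T s) (hx : x ∈ s) : x ∉ G.branches s T := by
  rintro ⟨w, hw, hwx⟩
  exact hT.notMem_of_mem_left hw (eq_of_reachable_isolate hwx hx ▸ hx)

lemma mem_branches_of_adj (hx : x ∈ G.branches s T) (hxy : G.Adj x y) (hxs : x ∉ s)
    (hys : y ∉ s) : y ∈ G.branches s T := by
  obtain ⟨w, hw, hwx⟩ := hx
  exact ⟨w, hw, hwx.trans (isolate_adj.2 ⟨hxy, hxs, hys⟩).reachable⟩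

lemma branches_pair_union_comm {A B : Set V} :
    G.branches {u, v} (A ∪ B) = G.branches {v, u} (B ∪ A) := by
  rw [Set.pair_comm, Set.union_comm]

lemma IsAcyclic.not_adj_of_adj (hG : G.IsAcyclic) (huv : G.Adj u v) (hux : G.Adj u x) :
    ¬ G.Adj v x := fun hvx =>
  hG.cliqueFree le_rfl {u, v, x} (is3Clique_triple_iff.2 ⟨huv, hux, hvx⟩)

lemma IsAcyclic.eq_of_reachable_isolate_pair (hG : G.IsAcyclic) (huv : G.Adj u v)
    (hux : G.Adj u x) (hxv : x ≠ v) (hy : G.Adj u y ∨ G.Adj v y) (hyu : y ≠ u)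
    (hxy : (G.isolate {u, v}).Reachable x y) : x = y := by
  by_contra hne
  -- the path from `x` to `y`, closed up through `u` (and `v`), avoids the bridge `xu`
  refine isAcyclic_iff_forall_adj_isBridge.1 hG hux.symm ?_
  have hsub : G.isolate {u, v} ≤ G.deleteEdges {s(x, u)} := deleteEdges_anti (by simp)
  refine (hxy.mono hsub).trans ?_
  rcases hy with huy | hvy
  · exact Adj.reachable (by simp [huy.symm, Ne.symm hne, hyu])
  · have hyv : (G.deleteEdges {s(x, u)}).Adj y v := by simp [hvy.symm, hyu, huv.ne']
    exact hyv.reachable.trans (Adj.reachable (by simp [huv.symm, hxv.symm, huv.ne']))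

variable [Fintype V]

def edgeWithPendants (G : SimpleGraph V) (u v : V) : Set V :=
  {x | x = u ∨ x = v ∨ (G.degree x = 1 ∧ (G.Adj x u ∨ G.Adj x v))}

lemma edgeWithPendants_comm : G.edgeWithPendants u v = G.edgeWithPendants v u := by
  ext x
  simp only [edgeWithPendants, Set.mem_ofPred_eq]
  tauto

lemma notMem_edgeWithPendants_of_adj (hxy : G.Adj x y) (hxu : x ≠ u) (hxv : x ≠ v)
    (hyu : y ≠ u) (hyv : y ≠ v) : x ∉ G.edgeWithPendants u v := by
  rintro (rfl | rfl | ⟨hdeg, hadj⟩)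
  · exact hxu rfl
  · exact hxv rfl
  · obtain ⟨z, -, hz⟩ := degree_eq_one_iff_existsUnique_adj.1 hdeg
    rcases hadj with hxu' | hxv'
    · exact hyu ((hz y hxy).trans (hz u hxu').symm)
    · exact hyv ((hz y hxy).trans (hz v hxv').symm)

noncomputable def innerNeighborFinset (G : SimpleGraph V) (u v : V) : Finset V :=
  {w ∈ G.neighborFinset u | w ≠ v ∧ G.degree w ≠ 1}

lemma mem_innerNeighborFinset {w : V} :
    w ∈ G.innerNeighborFinset u v ↔ G.Adj u w ∧ w ≠ v ∧ G.degree w ≠ 1 := by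
  simp [innerNeighborFinset]

lemma card_innerNeighborFinset_lt (huv : G.Adj u v) :
    #(G.innerNeighborFinset u v) < G.degree u :=
  card_lt_card (filter_ssubset.2 ⟨v, (G.mem_neighborFinset u v).2 huv, fun h => h.1 rfl⟩)

lemma IsAcyclic.two_mul_card_disagree_le (hG : G.IsAcyclic) (huv : G.Adj u v) {μ : V → Bool}
    (hsame : ∀ y, G.Adj x y → y ≠ u → y ≠ v → μ y = μ x)
    (hleaf : ∀ y, G.Adj x y → (y = u ∨ y = v) → μ y ≠ μ x → G.degree x ≠ 1) :
    2 * #{y ∈ G.neighborFinset x | μ y ≠ μ x} ≤ G.degree x := by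
  set A := {y ∈ G.neighborFinset x | μ y ≠ μ x}
  have hA : ∀ y ∈ A, G.Adj x y ∧ (y = u ∨ y = v) ∧ μ y ≠ μ x := fun y hy => by
    obtain ⟨hxy, hne⟩ := mem_filter.1 hy
    rw [mem_neighborFinset] at hxy
    exact ⟨hxy, by by_contra! h; exact hne (hsame y hxy h.1 h.2), hne⟩
  -- two disagreeing neighbours would be `u` and `v`, closing a triangle with `x`
  have hA1 : #A ≤ 1 := card_le_one.2 fun a ha b hb => by
    obtain ⟨hxa, rfl | rfl, -⟩ := hA a ha <;> obtain ⟨hxb, rfl | rfl, -⟩ := hA b hb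
    · rfl
    · exact absurd hxb.symm (hG.not_adj_of_adj huv hxa.symm)
    · exact absurd hxa.symm (hG.not_adj_of_adj huv hxb.symm)
    · rfl
  obtain hA0 | ⟨y, hy⟩ := A.eq_empty_or_nonempty
  · simp [hA0]
  · obtain ⟨hxy, hyuv, hne⟩ := hA y hy
    have hpos : 0 < G.degree x := G.degree_pos_iff_exists_adj x |>.2 ⟨y, hxy⟩
    have := hleaf y hxy hyuv hne
    omega

variable {Tu Tv : Finset V}

lemma notMem_branches_of_mem_pair (hTu : Tu ⊆ G.innerNeighborFinset u v)
    (hTv : Tv ⊆ G.innerNeighborFinset v u) {z : V} (hz : z ∈ ({u, v} : Set V)) :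
    z ∉ G.branches {u, v} (↑Tu ∪ ↑Tv) := by
  refine notMem_branches (Set.disjoint_left.2 fun w hw hwuv => ?_) hz
  rcases hw with hw | hw
  · obtain ⟨huw, hwv, -⟩ := mem_innerNeighborFinset.1 (hTu hw)
    rcases hwuv with rfl | rfl
    exacts [huw.ne' rfl, hwv rfl]
  · obtain ⟨hvw, hwu, -⟩ := mem_innerNeighborFinset.1 (hTv hw)
    rcases hwuv with rfl | rfl
    exacts [hwu rfl, hvw.ne' rfl]

lemma IsAcyclic.mem_of_mem_branches (hG : G.IsAcyclic) (huv : G.Adj u v)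
    (hTu : Tu ⊆ G.innerNeighborFinset u v) (hTv : Tv ⊆ G.innerNeighborFinset v u)
    (hy : y ∈ G.branches {u, v} (↑Tu ∪ ↑Tv)) (huy : G.Adj u y) : y ∈ Tu := by
  have hyv : y ≠ v := by rintro rfl; exact notMem_branches_of_mem_pair hTu hTv (by simp) hy
  obtain ⟨w, hw | hw, hwy⟩ := hy
  · obtain ⟨huw, hwv, -⟩ := mem_innerNeighborFinset.1 (hTu hw)
    rwa [← hG.eq_of_reachable_isolate_pair huv huw hwv (.inl huy) huy.ne' hwy]
  · obtain ⟨hvw, hwu, -⟩ := mem_innerNeighborFinset.1 (hTv hw)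
    rw [Set.pair_comm] at hwy
    obtain rfl := hG.eq_of_reachable_isolate_pair huv.symm hvw hwu (.inr huy) hyv hwy
    exact absurd hvw (hG.not_adj_of_adj huv huy)

lemma IsAcyclic.two_mul_card_disagree_branches_le (hG : G.IsAcyclic) (huv : G.Adj u v)
    (hTu : Tu ⊆ G.innerNeighborFinset u v) (hTv : Tv ⊆ G.innerNeighborFinset v u)
    (hTu2 : 2 * #Tu ≤ G.degree u) (hxv : x ≠ v) :
    2 * #{y ∈ G.neighborFinset x | decide (y ∈ G.branches {u, v} (↑Tu ∪ ↑Tv)) ≠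
      decide (x ∈ G.branches {u, v} (↑Tu ∪ ↑Tv))} ≤ G.degree x := by
  set R := G.branches {u, v} (↑Tu ∪ ↑Tv) with hR_def
  have hR : ∀ z ∈ ({u, v} : Set V), z ∉ R := fun z hz => notMem_branches_of_mem_pair hTu hTv hz
  by_cases hxu : x = u
  · subst hxu
    refine le_trans (Nat.mul_le_mul_left 2 (card_le_card fun y hy => ?_)) hTu2
    obtain ⟨hxy, hne⟩ := mem_filter.1 hy
    simp only [hR x (by simp), decide_false, ne_eq, decide_eq_false_iff_not, not_not] at hne
    exact hG.mem_of_mem_branches huv hTu hTv hne ((G.mem_neighborFinset x y).1 hxy)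
  have hxuv : x ∉ ({u, v} : Set V) := by simp [hxu, hxv]
  refine hG.two_mul_card_disagree_le huv (fun y hxy hyu hyv => ?_) (fun y hxy hy hne => ?_)
  · have hyuv : y ∉ ({u, v} : Set V) := by simp [hyu, hyv]
    simp only [decide_eq_decide]
    exact ⟨(mem_branches_of_adj · hxy.symm hyuv hxuv), (mem_branches_of_adj · hxy hxuv hyuv)⟩
  · have hx : x ∈ R := by simpa [hR y (by simpa using hy)] using hne
    rcases hy with rfl | rfl
    · exact (mem_innerNeighborFinset.1 (hTu (hG.mem_of_mem_branches huv hTu hTv hx hxy.symm))).2.2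
    · rw [hR_def, branches_pair_union_comm] at hx
      exact (mem_innerNeighborFinset.1
        (hTv (hG.mem_of_mem_branches huv.symm hTv hTu hx hxy.symm))).2.2

lemma IsAcyclic.two_mul_card_disagree_branches_union_le (hG : G.IsAcyclic) (huv : G.Adj u v)
    (hTu : Tu ⊆ G.innerNeighborFinset u v)
    (hWu2 : 2 * #(G.innerNeighborFinset u v \ Tu) ≤ G.degree u) (hxv : x ≠ v) :
    2 * #{y ∈ G.neighborFinset x |
      decide (y ∈ G.branches {u, v} (↑Tu ∪ ↑Tv) ∪ G.edgeWithPendants u v) ≠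
      decide (x ∈ G.branches {u, v} (↑Tu ∪ ↑Tv) ∪ G.edgeWithPendants u v)} ≤ G.degree x := by
  set R := G.branches {u, v} (↑Tu ∪ ↑Tv)
  set E := G.edgeWithPendants u v
  by_cases hxu : x = u
  · subst hxu
    refine le_trans (Nat.mul_le_mul_left 2 (card_le_card fun y hy => ?_)) hWu2
    obtain ⟨hxy, hne⟩ := mem_filter.1 hy
    rw [mem_neighborFinset] at hxy
    have hxE : x ∈ E := .inl rfl
    simp only [Set.mem_union, hxE, or_true, decide_true, ne_eq, decide_eq_true_eq, not_or] at hne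
    refine mem_sdiff.2 ⟨mem_innerNeighborFinset.2 ⟨hxy, fun h => hne.2 (.inr (.inl h)),
      fun h => hne.2 (.inr (.inr ⟨h, .inl hxy.symm⟩))⟩, fun h => hne.1 (subset_branches (.inl h))⟩
  have hxuv : x ∉ ({u, v} : Set V) := by simp [hxu, hxv]
  refine hG.two_mul_card_disagree_le huv (fun y hxy hyu hyv => ?_) (fun y hxy hy hne hdeg => ?_)
  · have hyuv : y ∉ ({u, v} : Set V) := by simp [hyu, hyv]
    have hxE : x ∉ E := notMem_edgeWithPendants_of_adj hxy hxu hxv hyu hyv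
    have hyE : y ∉ E := notMem_edgeWithPendants_of_adj hxy.symm hyu hyv hxu hxv
    simp only [Set.mem_union, hxE, hyE, or_false, decide_eq_decide]
    exact ⟨(mem_branches_of_adj · hxy.symm hyuv hxuv), (mem_branches_of_adj · hxy hxuv hyuv)⟩
  · have hyE : y ∈ E := by rcases hy with rfl | rfl; exacts [.inl rfl, .inr (.inl rfl)]
    have hxE : x ∈ E := .inr (.inr ⟨hdeg, by rcases hy with rfl | rfl; exacts [.inl hxy, .inr hxy]⟩)
    simp [hxE, hyE] at hne

lemma IsAcyclic.isValidProfile_branches (hG : G.IsAcyclic) (huv : G.Adj u v)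
    (hTu : Tu ⊆ G.innerNeighborFinset u v) (hTv : Tv ⊆ G.innerNeighborFinset v u)
    (hTu2 : 2 * #Tu ≤ G.degree u) (hTv2 : 2 * #Tv ≤ G.degree v) :
    IsValidProfile G fun x => decide (x ∈ G.branches {u, v} (↑Tu ∪ ↑Tv)) := by
  refine isValidProfile_iff.2 fun x => ?_
  by_cases hxv : x = v
  · subst hxv
    simpa only [← branches_pair_union_comm] using
      hG.two_mul_card_disagree_branches_le huv.symm hTv hTu hTv2 huv.ne'
  · exact hG.two_mul_card_disagree_branches_le huv hTu hTv hTu2 hxv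

lemma IsAcyclic.isValidProfile_branches_union (hG : G.IsAcyclic) (huv : G.Adj u v)
    (hTu : Tu ⊆ G.innerNeighborFinset u v) (hTv : Tv ⊆ G.innerNeighborFinset v u)
    (hWu2 : 2 * #(G.innerNeighborFinset u v \ Tu) ≤ G.degree u)
    (hWv2 : 2 * #(G.innerNeighborFinset v u \ Tv) ≤ G.degree v) :
    IsValidProfile G fun x =>
      decide (x ∈ G.branches {u, v} (↑Tu ∪ ↑Tv) ∪ G.edgeWithPendants u v) := by
  refine isValidProfile_iff.2 fun x => ?_
  by_cases hxv : x = v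
  · subst hxv
    simpa only [← branches_pair_union_comm, ← edgeWithPendants_comm] using
      hG.two_mul_card_disagree_branches_union_le (Tv := Tu) huv.symm hTv hWv2 huv.ne'
  · exact hG.two_mul_card_disagree_branches_union_le huv hTu hWu2 hxv

theorem IsAcyclic.exists_isValidProfile_ne (hG : G.IsAcyclic) (huv : G.Adj u v) :
    ∃ μ ν : V → Bool, IsValidProfile G μ ∧ IsValidProfile G ν ∧ μ u ≠ ν u ∧
      ∀ x, μ x ≠ ν x → x ∈ G.edgeWithPendants u v := by
  obtain ⟨Tu, hTu, hTu2, hWu2⟩ := exists_subset_two_mul_card_le (card_innerNeighborFinset_lt huv)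
  obtain ⟨Tv, hTv, hTv2, hWv2⟩ :=
    exists_subset_two_mul_card_le (card_innerNeighborFinset_lt huv.symm)
  have huR := notMem_branches_of_mem_pair hTu hTv (show u ∈ ({u, v} : Set V) by simp)
  refine ⟨_, _, hG.isValidProfile_branches_union huv hTu hTv hWu2 hWv2,
    hG.isValidProfile_branches huv hTu hTv hTu2 hTv2, ?_, fun x hx => ?_⟩
  · simp [huR, edgeWithPendants]
  · by_contra hxE
    simp [hxE] at hx

end SimpleGraph

section Domination
variable {V : Type*} [Fintype V] {G : SimpleGraph V}

lemma IsIDS.exists_mem_edgeWithPendants {D : Set V} (hD : IsIDS G D) (hG : G.IsAcyclic)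
    {u v : V} (huv : G.Adj u v) : ∃ x ∈ D, x ∈ G.edgeWithPendants u v := by
  obtain ⟨μ, ν, hμ, hν, hne, hdiff⟩ := hG.exists_isValidProfile_ne huv
  by_contra! h
  exact hne (congrFun (hD μ ν hμ hν fun x hx => by_contra fun hx' => h x hx (hdiff x hx')) u)

theorem exists_leafless_isVertexCover_card_le {D : Finset V}
    (hD : ∀ u v, G.Adj u v → ∃ x ∈ D, x ∈ G.edgeWithPendants u v)
    (hleaves : ∀ x y, G.Adj x y → G.degree x = 1 → G.degree y ≠ 1) :
    ∃ C : Finset V, IsVertexCover G ↑C ∧ (∀ v ∈ C, G.degree v ≠ 1) ∧ #C ≤ #D := by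
  let shift : V → Finset V := fun x => if G.degree x = 1 then G.neighborFinset x else {x}
  have hshift : ∀ x y, y ∈ shift x ↔ (G.degree x = 1 ∧ G.Adj x y) ∨ (G.degree x ≠ 1 ∧ y = x) := by
    intro x y
    by_cases hx : G.degree x = 1 <;> simp [shift, hx]
  refine ⟨D.biUnion shift, fun u v huv => ?_, fun y hy => ?_, ?_⟩
  · obtain ⟨x, hxD, hx⟩ := hD u v huv
    simp only [coe_biUnion, Set.mem_iUnion, mem_coe, hshift]
    by_cases hxleaf : G.degree x = 1
    · have hxuv : G.Adj x u ∨ G.Adj x v := by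
        rcases hx with rfl | rfl | ⟨-, h⟩
        exacts [.inr huv, .inl huv.symm, h]
      rcases hxuv with h | h
      exacts [.inl ⟨x, hxD, .inl ⟨hxleaf, h⟩⟩, .inr ⟨x, hxD, .inl ⟨hxleaf, h⟩⟩]
    · rcases hx with rfl | rfl | ⟨h, -⟩
      exacts [.inl ⟨x, hxD, .inr ⟨hxleaf, rfl⟩⟩, .inr ⟨x, hxD, .inr ⟨hxleaf, rfl⟩⟩,
        absurd h hxleaf]
  · obtain ⟨x, -, hy⟩ := mem_biUnion.1 hy
    rcases (hshift x y).1 hy with ⟨hx, hxy⟩ | ⟨hx, rfl⟩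
    exacts [hleaves x y hxy hx, hx]
  · refine (card_biUnion_le_card_mul D shift 1 fun x _ => ?_).trans_eq (mul_one _)
    by_cases hx : G.degree x = 1 <;> simp [shift, hx]

end Domination

/-- in an odd-degree tree, a minimum vertex cover among the vertex
covers containing no leaf is a minimum IDS. -/
theorem leafless_min_vertexCover_is_min_ids {V : Type*} [Fintype V]
    (G : SimpleGraph V) (htree : G.IsTree) (hodd : ∀ v : V, Odd (G.degree v))
    (C : Finset V) (hvc : IsVertexCover G ↑C) (hleaf : ∀ v ∈ C, G.degree v ≠ 1)
    (hmin : ∀ C' : Finset V, IsVertexCover G ↑C' → (∀ v ∈ C', G.degree v ≠ 1) →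
      C.card ≤ C'.card) :
    IsIDS G ↑C ∧ ∀ D : Finset V, IsIDS G ↑D → C.card ≤ D.card := by
  refine ⟨isIDS_of_isVertexCover (fun x _ => hodd x) hvc, fun D hD => ?_⟩
  have hleaves : ∀ x y, G.Adj x y → G.degree x = 1 → G.degree y ≠ 1 := fun x y hxy hx hy =>
    (hvc hxy).elim (fun h => hleaf x h hx) (fun h => hleaf y h hy)
  obtain ⟨C', hC', hC'leaf, hC'D⟩ := exists_leafless_isVertexCover_card_le
    (fun u v huv => hD.exists_mem_edgeWithPendants htree.isAcyclic huv) hleaves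
  exact (hmin C' hC' hC'leaf).trans hC'D
end
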